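/- 3·Λ(π/3) = 2·Λ(π/6), i.e., the constant v₃ (the volume of the regular ideal hyperbolic tetrahedron) satisfies v₃ = 3Λ(π/3) = 2Λ(π/6). -/

import Mathlib

/-!
Since `2 sin 2t = (2 sin t) (2 sin (t + π/2))` away from the zeros of `sin 2t`, integrating gives
the duplication formula `Λ(2x) = 2Λ(x) + 2(Λ(x + π/2) - Λ(π/2))`. At `x = π/2` it gives `Λ(π) = 0`,
hence `Λ(π - x) = -Λ(x)` by `sin (π - t) = sin t`, and then `Λ(π/2) = 0` at `x = π/4`.
At `x = π/6` it reads `Λ(π/3) = 2Λ(π/6) + 2Λ(2π/3) = 2Λ(π/6) - 2Λ(π/3)`.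
-/

open Real

/-- The Lobachevsky function `Λ(x) = -∫₀ˣ log |2 sin t| dt`. -/
noncomputable def lobachevsky (x : ℝ) : ℝ :=
  -∫ t in (0:ℝ)..x, Real.log |2 * Real.sin t|

open MeasureTheory

theorem intervalIntegrable_log_abs_two_mul_sin (a b : ℝ) :
    IntervalIntegrable (fun t ↦ log |2 * sin t|) volume a b :=
  (analyticOnNhd_const.mul analyticOnNhd_sin).meromorphicOn.intervalIntegrable_log_norm

theorem ae_sin_two_mul_ne_zero : ∀ᵐ t : ℝ, sin (2 * t) ≠ 0 := by
  simp only [ae_iff, not_not]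
  refine Set.Countable.measure_zero ((Set.countable_range fun n : ℤ ↦ n * π / 2).mono ?_) _
  intro t ht
  obtain ⟨n, hn⟩ := sin_eq_zero_iff.mp ht
  exact ⟨n, by simp only; linarith⟩

theorem lobachevsky_sub_lobachevsky (a b : ℝ) :
    lobachevsky b - lobachevsky a = -∫ t in a..b, log |2 * sin t| := by
  rw [lobachevsky, lobachevsky, ← intervalIntegral.integral_interval_sub_left
    (intervalIntegrable_log_abs_two_mul_sin 0 b) (intervalIntegrable_log_abs_two_mul_sin 0 a)]
  ring

theorem log_abs_two_mul_sin_two_mul {t : ℝ} (ht : sin (2 * t) ≠ 0) :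
    log |2 * sin (2 * t)| = log |2 * sin t| + log |2 * sin (t + π / 2)| := by
  rw [sin_two_mul, mul_ne_zero_iff, mul_ne_zero_iff] at ht
  rw [sin_add_pi_div_two, ← log_mul, ← abs_mul, sin_two_mul]
  · ring_nf
  · simpa using ht.1.2
  · simpa using ht.2

theorem lobachevsky_two_mul' (x : ℝ) :
    lobachevsky (2 * x) =
      2 * lobachevsky x + 2 * (lobachevsky (x + π / 2) - lobachevsky (π / 2)) := by
  have hscale : ∫ t in (0:ℝ)..2 * x, log |2 * sin t| =
      2 * ∫ t in (0:ℝ)..x, log |2 * sin (2 * t)| := by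
    rw [intervalIntegral.integral_comp_mul_left (fun t ↦ log |2 * sin t|) two_ne_zero,
      mul_zero, smul_eq_mul, mul_inv_cancel_left₀ two_ne_zero]
  have hshift : ∫ t in (0:ℝ)..x, log |2 * sin (t + π / 2)| =
      ∫ t in π / 2..x + π / 2, log |2 * sin t| := by
    simpa using intervalIntegral.integral_comp_add_right (a := 0) (b := x)
      (fun t ↦ log |2 * sin t|) (π / 2)
  have hsplit : ∫ t in (0:ℝ)..x, log |2 * sin (2 * t)| =
      (∫ t in (0:ℝ)..x, log |2 * sin t|) + ∫ t in π / 2..x + π / 2, log |2 * sin t| := by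
    rw [← hshift, ← intervalIntegral.integral_add (intervalIntegrable_log_abs_two_mul_sin 0 x)]
    · refine intervalIntegral.integral_congr_ae ?_
      filter_upwards [ae_sin_two_mul_ne_zero] with t ht _ using log_abs_two_mul_sin_two_mul ht
    · simpa using
        (intervalIntegrable_log_abs_two_mul_sin (π / 2) (x + π / 2)).comp_add_right (π / 2)
  rw [lobachevsky_sub_lobachevsky, lobachevsky, lobachevsky, hscale, hsplit]
  ring

theorem lobachevsky_pi : lobachevsky π = 0 := by
  have h := lobachevsky_two_mul' (π / 2)
  rw [show 2 * (π / 2) = π by ring, add_halves] at h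
  linarith

theorem lobachevsky_pi_sub (x : ℝ) : lobachevsky (π - x) = -lobachevsky x := by
  have hrefl : ∫ t in (0:ℝ)..x, log |2 * sin t| = ∫ t in π - x..π, log |2 * sin t| := by
    simpa using (intervalIntegral.integral_comp_sub_left (a := 0) (b := x)
      (fun t ↦ log |2 * sin t|) π)
  have h := lobachevsky_sub_lobachevsky (π - x) π
  rw [lobachevsky_pi, ← hrefl, ← lobachevsky] at h
  linarith

theorem lobachevsky_pi_div_two : lobachevsky (π / 2) = 0 := by
  have h := lobachevsky_two_mul' (π / 4)
  rw [show 2 * (π / 4) = π / 2 by ring, show π / 4 + π / 2 = π - π / 4 by ring,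
    lobachevsky_pi_sub] at h
  linarith

theorem lobachevsky_two_mul (x : ℝ) :
    lobachevsky (2 * x) = 2 * lobachevsky x + 2 * lobachevsky (x + π / 2) := by
  rw [lobachevsky_two_mul', lobachevsky_pi_div_two, sub_zero]

/-- `3·Λ(π/3) = 2·Λ(π/6)`: two expressions for the volume `v₃` of the regular
ideal hyperbolic tetrahedron. -/
theorem three_lob_pi_div_three_eq_two_lob_pi_div_six :
    3 * lobachevsky (Real.pi / 3) = 2 * lobachevsky (Real.pi / 6) := by
  have h := lobachevsky_two_mul (π / 6)
  rw [show 2 * (π / 6) = π / 3 by ring, show π / 6 + π / 2 = π - π / 3 by ring,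
    lobachevsky_pi_sub] at h
  linarith
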